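/- arXiv:1107.4158 — 4 statements merged into one kernel-verified Lean document; each statement's English description precedes it below -/
import Mathlib

section
/- Let X : ℙ² \ {p₁,p₂,p₃} → ℙ⁵ be given in homogeneous coordinates by X([x:y:z]) = [(x²-y²)z : (y²-z²)x : (z²-x²)y : (x²+y²)z : (y²+z²)x : (z²+x²)y], where p₁=[1:0:0], p₂=[0:1:0], p₃=[0:0:1]. Then X is injective on ℙ² \ {p₁,p₂,p₃}. -/
/-- The rational map `X : ℙ² ⇢ ℙ⁵`,
`X([x:y:z]) = [(x²-y²)z : (y²-z²)x : (z²-x²)y : (x²+y²)z : (y²+z²)x : (z²+x²)y]`,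
is injective away from the three coordinate points `p₁=[1:0:0]`, `p₂=[0:1:0]`,
`p₃=[0:0:1]`: in homogeneous coordinates, if `(x,y,z)` and `(x',y',z')` avoid the
coordinate points (i.e. no two of the coordinates vanish simultaneously) and their
images under the six cubics are proportional, then `(x,y,z)` and `(x',y',z')` are
proportional. -/
theorem triRuled_map_injective (x y z x' y' z' : ℂ)
    (h1 : ¬(y = 0 ∧ z = 0)) (h2 : ¬(x = 0 ∧ z = 0)) (h3 : ¬(x = 0 ∧ y = 0))
    (h1' : ¬(y' = 0 ∧ z' = 0)) (h2' : ¬(x' = 0 ∧ z' = 0)) (h3' : ¬(x' = 0 ∧ y' = 0))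
    (hμ : ∃ μ : ℂ, μ ≠ 0 ∧
      (x' ^ 2 - y' ^ 2) * z' = μ * ((x ^ 2 - y ^ 2) * z) ∧
      (y' ^ 2 - z' ^ 2) * x' = μ * ((y ^ 2 - z ^ 2) * x) ∧
      (z' ^ 2 - x' ^ 2) * y' = μ * ((z ^ 2 - x ^ 2) * y) ∧
      (x' ^ 2 + y' ^ 2) * z' = μ * ((x ^ 2 + y ^ 2) * z) ∧
      (y' ^ 2 + z' ^ 2) * x' = μ * ((y ^ 2 + z ^ 2) * x) ∧
      (z' ^ 2 + x' ^ 2) * y' = μ * ((z ^ 2 + x ^ 2) * y)) :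
    ∃ ν : ℂ, ν ≠ 0 ∧ x' = ν * x ∧ y' = ν * y ∧ z' = ν * z := by
  obtain ⟨μ, hμ0, e1, e2, e3, e4, e5, e6⟩ := hμ
  have A : x'^2*z' = μ*(x^2*z) := by linear_combination (e1+e4)/2
  have B : y'^2*z' = μ*(y^2*z) := by linear_combination (e4-e1)/2
  have C : y'^2*x' = μ*(y^2*x) := by linear_combination (e2+e5)/2
  have D : z'^2*x' = μ*(z^2*x) := by linear_combination (e5-e2)/2
  have E : z'^2*y' = μ*(z^2*y) := by linear_combination (e3+e6)/2
  have F : x'^2*y' = μ*(x^2*y) := by linear_combination (e6-e3)/2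
  have sq0 : ∀ a : ℂ, a ^ 2 = 0 → a = 0 := fun a h =>
    pow_eq_zero_iff (by norm_num : (2:ℕ) ≠ 0) |>.mp h
  by_cases hx : x = 0
  · have hy : y ≠ 0 := fun h => h3 ⟨hx, h⟩
    have hz : z ≠ 0 := fun h => h2 ⟨hx, h⟩
    have hx' : x' = 0 := by
      by_contra hx'
      have hy'0 : y' = 0 := by
        have h0 : x'^2 * y' = 0 := by rw [F, hx]; ring
        rcases mul_eq_zero.mp h0 with h | h
        · exact absurd (sq0 _ h) hx'
        · exact h
      have hz'0 : z' = 0 := by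
        have h0 : x'^2 * z' = 0 := by rw [A, hx]; ring
        rcases mul_eq_zero.mp h0 with h | h
        · exact absurd (sq0 _ h) hx'
        · exact h
      exact h1' ⟨hy'0, hz'0⟩
    have hy' : y' ≠ 0 := fun h => h3' ⟨hx', h⟩
    have hz' : z' ≠ 0 := fun h => h2' ⟨hx', h⟩
    have key : y'*z'*y*z*(y'*z - z'*y) = 0 := by
      linear_combination z^2*y*B - y^2*z*E
    have hkey : y'*z - z'*y = 0 :=
      (mul_eq_zero.mp key).resolve_left
        (mul_ne_zero (mul_ne_zero (mul_ne_zero hy' hz') hy) hz)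
    refine ⟨y'/y, div_ne_zero hy' hy, ?_, ?_, ?_⟩
    · rw [hx, hx']; ring
    · field_simp
    · rw [div_mul_eq_mul_div, eq_div_iff hy]; linear_combination -hkey
  · by_cases hy : y = 0
    · have hz : z ≠ 0 := fun h => h1 ⟨hy, h⟩
      have hy'0 : y' = 0 := by
        by_contra hy'
        have hx'0 : x' = 0 := by
          have h0 : y'^2 * x' = 0 := by rw [C, hy]; ring
          rcases mul_eq_zero.mp h0 with h | h
          · exact absurd (sq0 _ h) hy'
          · exact h
        have hz'0 : z' = 0 := by
          have h0 : z'^2 * y' = 0 := by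
            rw [E, hy]; ring
          rcases mul_eq_zero.mp h0 with h | h
          · exact sq0 _ h
          · exact absurd h hy'
        exact h2' ⟨hx'0, hz'0⟩
      have hx' : x' ≠ 0 := fun h => h3' ⟨h, hy'0⟩
      have hz' : z' ≠ 0 := fun h => h1' ⟨hy'0, h⟩
      have key : x'*z'*x*z*(x'*z - z'*x) = 0 := by
        linear_combination z^2*x*A - x^2*z*D
      have hkey : x'*z - z'*x = 0 :=
        (mul_eq_zero.mp key).resolve_left
          (mul_ne_zero (mul_ne_zero (mul_ne_zero hx' hz') hx) hz)
      refine ⟨x'/x, div_ne_zero hx' hx, ?_, ?_, ?_⟩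
      · field_simp
      · rw [hy, hy'0]; ring
      · rw [div_mul_eq_mul_div, eq_div_iff hx]; linear_combination -hkey
    · by_cases hz : z = 0
      · have hz'0 : z' = 0 := by
          by_contra hz'
          have hy'0 : y' = 0 := by
            have h0 : y'^2 * z' = 0 := by rw [B, hz]; ring
            rcases mul_eq_zero.mp h0 with h | h
            · exact sq0 _ h
            · exact absurd h hz'
          have hx'0 : x' = 0 := by
            have h0 : z'^2 * x' = 0 := by rw [D, hz]; ring
            rcases mul_eq_zero.mp h0 with h | h
            · exact absurd (sq0 _ h) hz'
            · exact h
          exact h3' ⟨hx'0, hy'0⟩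
        have hx' : x' ≠ 0 := fun h => h2' ⟨h, hz'0⟩
        have hy' : y' ≠ 0 := fun h => h1' ⟨h, hz'0⟩
        have key : x'*y'*x*y*(x'*y - y'*x) = 0 := by
          linear_combination y^2*x*F - x^2*y*C
        have hkey : x'*y - y'*x = 0 :=
          (mul_eq_zero.mp key).resolve_left
            (mul_ne_zero (mul_ne_zero (mul_ne_zero hx' hy') hx) hy)
        refine ⟨x'/x, div_ne_zero hx' hx, ?_, ?_, ?_⟩
        · field_simp
        · rw [div_mul_eq_mul_div, eq_div_iff hx]; linear_combination -hkey
        · rw [hz, hz'0]; ring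
      · -- generic case: x, y, z all nonzero
        have hx' : x' ≠ 0 := by
          intro h
          exact mul_ne_zero hμ0 (mul_ne_zero (pow_ne_zero 2 hx) hz)
            (by rw [← A, h]; ring)
        have hy' : y' ≠ 0 := by
          intro h
          exact mul_ne_zero hμ0 (mul_ne_zero (pow_ne_zero 2 hy) hz)
            (by rw [← B, h]; ring)
        have k1 : x'*y'*x*y*(x'*y - y'*x) = 0 := by
          linear_combination y^2*x*F - x^2*y*C
        have hk1 : x'*y - y'*x = 0 :=
          (mul_eq_zero.mp k1).resolve_left
            (mul_ne_zero (mul_ne_zero (mul_ne_zero hx' hy') hx) hy)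
        have k2 : x'^2*x^2*(z'*y - y'*z) = 0 := by
          linear_combination x^2*y*A - x^2*z*F
        have hk2 : z'*y - y'*z = 0 :=
          (mul_eq_zero.mp k2).resolve_left
            (mul_ne_zero (pow_ne_zero 2 hx') (pow_ne_zero 2 hx))
        refine ⟨y'/y, div_ne_zero hy' hy, ?_, ?_, ?_⟩
        · rw [div_mul_eq_mul_div, eq_div_iff hy]; linear_combination hk1
        · field_simp
        · rw [div_mul_eq_mul_div, eq_div_iff hy]; linear_combination hk2
end

section
/- The map x₁(s,t) = (sin(s+t), sin s, sin t, -cos(s+t), cos s, cos t) : ℂ² → ℂ⁶ satisfies the Legendrian condition: x₁*(X₀dY₀ - Y₀dX₀ + X₁dY₁ - Y₁dX₁ + X₂dY₂ - Y₂dX₂) = 0 identically. Equivalently, ω(x₁, ∂x₁/∂s) = 0 and ω(x₁, ∂x₁/∂t) = 0 for all (s,t), where ω is the standard symplectic form on ℂ⁶. -/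
/-- Standard symplectic form `ω((X,Y),(X',Y')) = Σᵢ (XᵢY'ᵢ - YᵢX'ᵢ)` on
`ℂ⁶ = ℂ³ × ℂ³` (indices `0,1,2` the `X`'s and `3,4,5` the `Y`'s). -/
noncomputable def omega (v w : Fin 6 → ℂ) : ℂ :=
  v 0 * w 3 - v 3 * w 0 + v 1 * w 4 - v 4 * w 1 + v 2 * w 5 - v 5 * w 2

/-- The tri-ruled surface parametrization
`x₁(s,t) = (sin(s+t), sin s, sin t, -cos(s+t), cos s, cos t)`. -/
noncomputable def x₁ : ℂ × ℂ → (Fin 6 → ℂ) := fun p =>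
  ![Complex.sin (p.1 + p.2), Complex.sin p.1, Complex.sin p.2,
    -Complex.cos (p.1 + p.2), Complex.cos p.1, Complex.cos p.2]

/-!
Each coordinate pair of `x₁` runs on the circle `X² + Y² = 1`: it is `(sin θ, c cos θ)` with
`c = ±1`, and on such a pair the Liouville form `X dY - Y dX` equals `-c dθ` because
`sin² θ + cos² θ = 1`. Hence `x₁* (Σᵢ Xᵢ dYᵢ - Yᵢ dXᵢ) = d(s + t) - ds - dt = 0`.
-/

open Complex

lemma differentiable_x₁ : Differentiable ℂ x₁ := by
  rw [differentiable_pi]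
  intro i
  fin_cases i <;>
    simp only [x₁, Fin.isValue, Fin.zero_eta, Fin.mk_one, Fin.reduceFinMk, Matrix.cons_val] <;>
    fun_prop

lemma fderiv_x₁_apply (p v : ℂ × ℂ) :
    fderiv ℂ x₁ p v = ![cos (p.1 + p.2) * (v.1 + v.2), cos p.1 * v.1, cos p.2 * v.2,
      sin (p.1 + p.2) * (v.1 + v.2), -sin p.1 * v.1, -sin p.2 * v.2] := by
  have hsum : HasFDerivAt (fun q : ℂ × ℂ => q.1 + q.2) (.fst ℂ ℂ ℂ + .snd ℂ ℂ ℂ) p :=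
    hasFDerivAt_fst.add hasFDerivAt_snd
  ext i
  change ContinuousLinearMap.proj (R := ℂ) i (fderiv ℂ x₁ p v) = _
  rw [← ContinuousLinearMap.comp_apply, ← fderiv_apply (differentiable_x₁ p)]
  fin_cases i <;>
    simp [x₁, fderiv_csin, fderiv_ccos, fderiv_fst, fderiv_snd, hsum.fderiv,
      hsum.differentiableAt, mul_add, add_comm]

lemma omega_x₁_fderiv (p v : ℂ × ℂ) : omega (x₁ p) (fderiv ℂ x₁ p v) = 0 := by
  rw [fderiv_x₁_apply]
  simp only [omega, x₁, Matrix.cons_val]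
  linear_combination (v.1 + v.2) * sin_sq_add_cos_sq (p.1 + p.2) - v.1 * sin_sq_add_cos_sq p.1
    - v.2 * sin_sq_add_cos_sq p.2

/-- `x₁` satisfies the Legendrian condition:
`ω(x₁, ∂x₁/∂s) = 0` and `ω(x₁, ∂x₁/∂t) = 0` for all `(s,t)`. -/
theorem triRuled_legendrian (p : ℂ × ℂ) :
    omega (x₁ p) (fderiv ℂ x₁ p (1, 0)) = 0 ∧
      omega (x₁ p) (fderiv ℂ x₁ p (0, 1)) = 0 :=
  ⟨omega_x₁_fderiv p _, omega_x₁_fderiv p _⟩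
end

section
/- Let f_k(x,y) be homogeneous polynomials of degree k for k = 3,...,m. Then the map x₁(x,y) = (1, x, y, -Σ_{k=3}^m f_k(x,y), Σ_{k=3}^m (1/(k-2)) ∂f_k/∂x, Σ_{k=3}^m (1/(k-2)) ∂f_k/∂y) : ℂ² → ℂ⁶ is Legendrian: ω(x₁, ∂x₁/∂x) = 0 and ω(x₁, ∂x₁/∂y) = 0 for all (x,y), where ω((X,Y),(X',Y')) = Σᵢ(XᵢY'ᵢ - YᵢX'ᵢ). -/
open MvPolynomial Finset

/-- The generalized flat Legendrian parametrization
`x₁(x,y) = (1, x, y, -Σ f_k, Σ (1/(k-2)) ∂f_k/∂x, Σ (1/(k-2)) ∂f_k/∂y)`. -/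
noncomputable def Xgen (m : ℕ) (f : ℕ → MvPolynomial (Fin 2) ℂ) :
    ℂ × ℂ → (Fin 6 → ℂ) := fun p =>
  ![1, p.1, p.2,
    -(∑ k ∈ Finset.Icc 3 m, MvPolynomial.eval ![p.1, p.2] (f k)),
    ∑ k ∈ Finset.Icc 3 m,
      (1 / ((k : ℂ) - 2)) * MvPolynomial.eval ![p.1, p.2] (MvPolynomial.pderiv 0 (f k)),
    ∑ k ∈ Finset.Icc 3 m,
      (1 / ((k : ℂ) - 2)) * MvPolynomial.eval ![p.1, p.2] (MvPolynomial.pderiv 1 (f k))]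

/-!
Write `x₁ = (1, x, y, H, G₀, G₁)` with polynomials `H, G₀, G₁`. Then
`ω(x₁, ∂ᵢx₁) = ∂ᵢH + x ∂ᵢG₀ + y ∂ᵢG₁ - Gᵢ`, so `x₁` is Legendrian as soon as
`∂ᵢH + Σⱼ Xⱼ ∂ᵢGⱼ = Gᵢ`. For `H = -Σ f_k` and `Gⱼ = Σ (k - 2)⁻¹ ∂ⱼf_k` this holds term by term,
by differentiating Euler's identity: `Σⱼ Xⱼ ∂ᵢ∂ⱼf_k = (k - 1) ∂ᵢf_k`.
-/

namespace MvPolynomial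

section Euler

variable {R σ : Type*} [Fintype σ]

theorem IsHomogeneous.sum_X_mul_pderiv_pderiv [CommSemiring R] {φ : MvPolynomial σ R} {n : ℕ}
    (h : φ.IsHomogeneous n) (i : σ) :
    ∑ j, X j * pderiv i (pderiv j φ) + pderiv i φ = n • pderiv i φ := by
  classical
  have := congrArg (pderiv i) h.sum_X_mul_pderiv
  simp only [map_sum, pderiv_mul, pderiv_X, sum_add_distrib, Pi.single_apply, ite_mul, one_mul,
    zero_mul, sum_ite_eq', mem_univ, if_true, map_nsmul] at this
  rw [← this, add_comm]

theorem sum_X_mul_pderiv_sum_C_mul_pderiv [CommRing R] {s : Finset ℕ} {f : ℕ → MvPolynomial σ R}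
    {c : ℕ → R} (hf : ∀ k ∈ s, (f k).IsHomogeneous k) (hc : ∀ k ∈ s, c k * ((k : R) - 2) = 1)
    (i : σ) :
    ∑ j, X j * pderiv i (∑ k ∈ s, C (c k) * pderiv j (f k)) =
      pderiv i (∑ k ∈ s, f k) + ∑ k ∈ s, C (c k) * pderiv i (f k) := by
  simp only [map_sum, pderiv_C_mul, mul_sum]
  rw [sum_comm, ← sum_add_distrib]
  refine sum_congr rfl fun k hk => ?_
  simp only [mul_left_comm (X _) (C (c k)), ← mul_sum]
  have euler := (hf k hk).sum_X_mul_pderiv_pderiv i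
  have hck := congrArg (C (σ := σ)) (hc k hk)
  simp only [map_mul, map_sub, map_natCast, map_ofNat, map_one, nsmul_eq_mul] at hck euler
  linear_combination C (c k) * euler + pderiv i (f k) * hck

end Euler

section Calculus

variable {𝕜 σ : Type*} [NontriviallyNormedField 𝕜] [Fintype σ]

theorem hasFDerivAt_eval (q : MvPolynomial σ 𝕜) (v : σ → 𝕜) :
    HasFDerivAt (fun v => eval v q)
      (∑ i, eval v (pderiv i q) • ContinuousLinearMap.proj (R := 𝕜) (φ := fun _ : σ => 𝕜) i)
      v := by
  classical
  induction q using MvPolynomial.induction_on with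
  | C a =>
    simp only [eval_C]
    exact (hasFDerivAt_const a v).congr_fderiv (by ext; simp)
  | add q r hq hr =>
    simp only [map_add]
    exact (hq.add hr).congr_fderiv (by ext; simp [add_mul, sum_add_distrib])
  | mul_X q i hq =>
    simp only [map_mul, eval_X]
    refine (hq.mul (hasFDerivAt_apply i v)).congr_fderiv ?_
    ext w
    simp [pderiv_X, Pi.single_apply, apply_ite, ite_mul, add_mul, sum_add_distrib, mul_sum,
      mul_assoc]

theorem hasFDerivAt_eval_pair (q : MvPolynomial (Fin 2) 𝕜) (p : 𝕜 × 𝕜) :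
    HasFDerivAt (fun p : 𝕜 × 𝕜 => eval ![p.1, p.2] q)
      (eval ![p.1, p.2] (pderiv 0 q) • ContinuousLinearMap.fst 𝕜 𝕜 𝕜 +
        eval ![p.1, p.2] (pderiv 1 q) • ContinuousLinearMap.snd 𝕜 𝕜 𝕜) p :=
  ((hasFDerivAt_eval q _).comp p
    (ContinuousLinearEquiv.finTwoArrow 𝕜 𝕜).symm.hasFDerivAt).congr_fderiv
    (by ext <;> simp [Fin.sum_univ_two])

end Calculus

end MvPolynomial

noncomputable def polynomialLift (H : MvPolynomial (Fin 2) ℂ)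
    (G : Fin 2 → MvPolynomial (Fin 2) ℂ) : ℂ × ℂ → (Fin 6 → ℂ) := fun p =>
  ![1, p.1, p.2, eval ![p.1, p.2] H, eval ![p.1, p.2] (G 0), eval ![p.1, p.2] (G 1)]

open ContinuousLinearMap in
theorem omega_polynomialLift_fderiv_eq_zero {H : MvPolynomial (Fin 2) ℂ}
    {G : Fin 2 → MvPolynomial (Fin 2) ℂ} (hG : ∀ i, pderiv i H + ∑ j, X j * pderiv i (G j) = G i)
    (p w : ℂ × ℂ) :
    omega (polynomialLift H G p) (fderiv ℂ (polynomialLift H G) p w) = 0 := by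
  set D : MvPolynomial (Fin 2) ℂ → ℂ × ℂ →L[ℂ] ℂ := fun q =>
    eval ![p.1, p.2] (pderiv 0 q) • fst ℂ ℂ ℂ + eval ![p.1, p.2] (pderiv 1 q) • snd ℂ ℂ ℂ
  have hlift : HasFDerivAt (polynomialLift H G)
      (pi ![0, fst ℂ ℂ ℂ, snd ℂ ℂ ℂ, D H, D (G 0), D (G 1)]) p := by
    refine hasFDerivAt_pi'' fun i => ?_
    rw [proj_pi]
    fin_cases i
    exacts [hasFDerivAt_const _ p, hasFDerivAt_fst, hasFDerivAt_snd,
      hasFDerivAt_eval_pair H p, hasFDerivAt_eval_pair (G 0) p, hasFDerivAt_eval_pair (G 1) p]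
  have h0 := congrArg (eval ![p.1, p.2]) (hG 0)
  have h1 := congrArg (eval ![p.1, p.2]) (hG 1)
  simp only [Fin.sum_univ_two, map_add, map_mul, eval_X, Matrix.cons_val_zero,
    Matrix.cons_val_one, Matrix.cons_val_fin_one] at h0 h1
  rw [hlift.fderiv]
  simp only [omega, polynomialLift, D, coe_pi', Matrix.cons_val, Matrix.cons_val_zero,
    Matrix.cons_val_one, add_apply, smul_apply, coe_fst', coe_snd', zero_apply, smul_eq_mul,
    one_mul, mul_zero, sub_zero]
  linear_combination w.1 * h0 + w.2 * h1

theorem Xgen_eq_polynomialLift (m : ℕ) (f : ℕ → MvPolynomial (Fin 2) ℂ) :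
    Xgen m f = polynomialLift (-∑ k ∈ Icc 3 m, f k)
      (fun j => ∑ k ∈ Icc 3 m, C (1 / ((k : ℂ) - 2)) * pderiv j (f k)) := by
  funext p
  simp [Xgen, polynomialLift]

/-- If `f_k` is homogeneous of degree `k` for `k = 3, ..., m`, the generalized flat
map `Xgen m f` is Legendrian: `ω(x₁, ∂x₁/∂x) = 0` and `ω(x₁, ∂x₁/∂y) = 0`. -/
theorem generalized_flat_legendrian (m : ℕ) (f : ℕ → MvPolynomial (Fin 2) ℂ)
    (hf : ∀ k ∈ Finset.Icc 3 m, (f k).IsHomogeneous k) (p : ℂ × ℂ) :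
    omega (Xgen m f p) (fderiv ℂ (Xgen m f) p (1, 0)) = 0 ∧
      omega (Xgen m f p) (fderiv ℂ (Xgen m f) p (0, 1)) = 0 := by
  have hc : ∀ k ∈ Icc 3 m, 1 / ((k : ℂ) - 2) * ((k : ℂ) - 2) = 1 := by
    intro k hk
    have hk2 : k ≠ 2 := by have := (mem_Icc.mp hk).1; omega
    exact one_div_mul_cancel (sub_ne_zero.mpr (by exact_mod_cast hk2))
  have hG : ∀ i, pderiv i (-∑ k ∈ Icc 3 m, f k) +
      ∑ j, X j * pderiv i (∑ k ∈ Icc 3 m, C (1 / ((k : ℂ) - 2)) * pderiv j (f k)) =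
      ∑ k ∈ Icc 3 m, C (1 / ((k : ℂ) - 2)) * pderiv i (f k) := fun i => by
    rw [sum_X_mul_pderiv_sum_C_mul_pderiv hf hc, map_neg, neg_add_cancel_left]
  rw [Xgen_eq_polynomialLift]
  exact ⟨omega_polynomialLift_fderiv_eq_zero hG p _, omega_polynomialLift_fderiv_eq_zero hG p _⟩
end

section
/- The lift of the tri-ruled map over the exceptional divisor at p₁ is an immersion: with Φ(1,y,z) = ((1-y²)z, (y²-z²), (z²-1)y, (1+y²)z, y²+z², (z²+1)y) and the substitution y = λ₁z, dividing by z, the three vectors v(λ₁,0), (∂v/∂z)(λ₁,0), (∂v/∂λ₁)(λ₁,0) ∈ ℂ⁶ are linearly independent for every λ₁ ∈ ℂ, where v(λ₁,z) = (1-λ₁²z², (λ₁²-1)z, (z²-1)λ₁, 1+λ₁²z², (λ₁²+1)z, (z²+1)λ₁). -/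
/-- The `z`-rescaled tri-ruled map on the blow-up chart over `p₁`:
`v(λ₁,z) = (1-λ₁²z², (λ₁²-1)z, (z²-1)λ₁, 1+λ₁²z², (λ₁²+1)z, (z²+1)λ₁)`. -/
noncomputable def vblow (l z : ℂ) : Fin 6 → ℂ :=
  ![1 - l ^ 2 * z ^ 2, (l ^ 2 - 1) * z, (z ^ 2 - 1) * l,
    1 + l ^ 2 * z ^ 2, (l ^ 2 + 1) * z, (z ^ 2 + 1) * l]

lemma vblow_zero (l : ℂ) : vblow l 0 = ![1, 0, -l, 1, 0, l] := by
  funext i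
  fin_cases i <;> simp [vblow]

lemma vblow_deriv_z (l : ℂ) :
    deriv (fun z => vblow l z) 0 = ![0, l ^ 2 - 1, 0, 0, l ^ 2 + 1, 0] := by
  have h : HasDerivAt (fun z : ℂ => vblow l z)
      (![0, l ^ 2 - 1, 0, 0, l ^ 2 + 1, 0]) 0 := by
    rw [hasDerivAt_pi]
    intro i
    fin_cases i
    · exact (((hasDerivAt_pow 2 (0:ℂ)).const_mul (l ^ 2)).const_sub 1).congr_deriv
        (by norm_num)
    · exact ((hasDerivAt_id (0:ℂ)).const_mul (l ^ 2 - 1)).congr_deriv (by norm_num)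
    · exact (((hasDerivAt_pow 2 (0:ℂ)).sub_const 1).mul_const l).congr_deriv (by norm_num)
    · exact (((hasDerivAt_pow 2 (0:ℂ)).const_mul (l ^ 2)).const_add 1).congr_deriv
        (by norm_num)
    · exact ((hasDerivAt_id (0:ℂ)).const_mul (l ^ 2 + 1)).congr_deriv (by norm_num)
    · exact (((hasDerivAt_pow 2 (0:ℂ)).add_const 1).mul_const l).congr_deriv (by norm_num)
  exact h.deriv

lemma vblow_deriv_l (l : ℂ) :
    deriv (fun l' => vblow l' 0) l = ![0, 0, -1, 0, 0, 1] := by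
  have h : HasDerivAt (fun l' : ℂ => vblow l' 0) (![0, 0, -1, 0, 0, 1]) l := by
    rw [hasDerivAt_pi]
    intro i
    fin_cases i <;> simp [vblow] <;>
      first
        | exact hasDerivAt_const _ _
        | exact (hasDerivAt_id l).neg
        | exact hasDerivAt_id l
  exact h.deriv

lemma vblow_vectors_li (l : ℂ) :
    LinearIndependent ℂ (![![1,0,-l,1,0,l], ![0, l^2-1, 0, 0, l^2+1, 0], ![0,0,-1,0,0,1]] :
      Fin 3 → Fin 6 → ℂ) := by
  rw [Fintype.linearIndependent_iff]
  intro g hg i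
  have hg' : ∀ j : Fin 6, g 0 * (![1,0,-l,1,0,l] : Fin 6 → ℂ) j
      + g 1 * (![0, l^2-1, 0, 0, l^2+1, 0] : Fin 6 → ℂ) j
      + g 2 * (![0,0,-1,0,0,1] : Fin 6 → ℂ) j = 0 := by
    intro j
    simpa [Fin.sum_univ_three, mul_comm] using congrFun hg j
  have h0 : g 0 * 1 + g 1 * 0 + g 2 * 0 = 0 := hg' 0
  have h1 : g 0 * 0 + g 1 * (l^2-1) + g 2 * 0 = 0 := hg' 1
  have h4 : g 0 * 0 + g 1 * (l^2+1) + g 2 * 0 = 0 := hg' 4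
  have h5 : g 0 * l + g 1 * 0 + g 2 * 1 = 0 := hg' 5
  fin_cases i
  · show g 0 = 0
    linear_combination h0
  · show g 1 = 0
    linear_combination (h4 - h1) / 2
  · show g 2 = 0
    linear_combination h5 - l * h0

/-- The lift of the tri-ruled map over the exceptional divisor at `p₁` is an
immersion: for every `λ₁ ∈ ℂ`, the three vectors `v(λ₁,0)`, `(∂v/∂z)(λ₁,0)`,
`(∂v/∂λ₁)(λ₁,0)` in `ℂ⁶` are linearly independent. -/
theorem triRuled_blowup_immersion (l : ℂ) :
    LinearIndependent ℂ
      ![vblow l 0, deriv (fun z => vblow l z) 0, deriv (fun l' => vblow l' 0) l] := by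
  rw [vblow_zero, vblow_deriv_z, vblow_deriv_l]
  exact vblow_vectors_li l
end
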